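/- Let ρ, e, h, ĥ, ρ̂ : ℝ³ × ℝ → ℝ, f, f̂ : ℝ³ × ℝ → ℝ³, q : ℝ³ × ℝ → ℝ³, s : ℝ³ × ℝ → Matrix (Fin 3) (Fin 3) ℝ, and u : ℝ³ × ℝ → ℝ³ with v = ∂u/∂t, all sufficiently smooth. Suppose the equation of motion ρ ∂²u/∂t² = ∇·s + ρ(f + f̂) − ρ̂ v and the total energy balance ρ ∂(e + |v|²/2)/∂t − ∇·(s·v) + ∇·q = ρ( h + ĥ + f·v − (ρ̂/ρ)(e + |v|²/2) ) hold at every point, where ρ > 0 everywhere. Then at every point the internal energy balance ρ ∂e/∂t − sᵀ:∇v + ∇·q = g holds, where g = ρ(h + ĥ) − ρ f̂·v − ρ̂ ( e − |v|²/2 ). -/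

import Mathlib

/-!
Taking the inner product of the equation of motion with `v` gives the balance of kinetic
energy `ρ v·∂v/∂t = (∇·s)·v + ρ (f + f̂)·v − ρ̂ |v|²`. Since `∂(|v|²/2)/∂t = v·∂v/∂t` and
`∇·(s·v) = (∇·s)·v + sᵀ:∇v`, subtracting it from the total energy balance leaves exactly the
internal energy balance.
-/

/-- Spatial partial derivative of a scalar field on `ℝ³` in the `i`-th coordinate
direction. -/
noncomputable def pd (f : (Fin 3 → ℝ) → ℝ) (i : Fin 3) (x : Fin 3 → ℝ) : ℝ :=
  fderiv ℝ f x (Pi.single i 1)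

/-- Time derivative of a scalar field on space-time. -/
noncomputable def tderiv (f : (Fin 3 → ℝ) × ℝ → ℝ) (p : (Fin 3 → ℝ) × ℝ) : ℝ :=
  deriv (fun τ => f (p.1, τ)) p.2

/-- Velocity field `v = ∂u/∂t` associated with a displacement field `u`. -/
noncomputable def vel (u : (Fin 3 → ℝ) × ℝ → (Fin 3 → ℝ))
    (p : (Fin 3 → ℝ) × ℝ) (j : Fin 3) : ℝ :=
  deriv (fun τ => u (p.1, τ) j) p.2

theorem hasDerivAt_sum_sq_div_two {ι : Type*} (S : Finset ι) {g : ι → ℝ → ℝ} {g' : ι → ℝ}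
    {t : ℝ} (hg : ∀ j ∈ S, HasDerivAt (g j) (g' j) t) :
    HasDerivAt (fun τ => (∑ j ∈ S, g j τ ^ 2) / 2) (∑ j ∈ S, g j t * g' j) t := by
  refine ((HasDerivAt.fun_sum fun j hj => (hg j hj).fun_pow 2).div_const 2).congr_deriv ?_
  rw [Finset.sum_div]
  refine Finset.sum_congr rfl fun j _ => ?_
  push_cast
  ring

theorem tderiv_add_half_sum_sq {ι : Type*} [Fintype ι] (e : (Fin 3 → ℝ) × ℝ → ℝ)
    (w : (Fin 3 → ℝ) × ℝ → ι → ℝ) (p : (Fin 3 → ℝ) × ℝ)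
    (he : DifferentiableAt ℝ (fun τ => e (p.1, τ)) p.2)
    (hw : ∀ j, DifferentiableAt ℝ (fun τ => w (p.1, τ) j) p.2) :
    tderiv (fun r => e r + (∑ j, w r j ^ 2) / 2) p
      = tderiv e p + ∑ j, w p j * tderiv (fun r => w r j) p :=
  (he.hasDerivAt.add
    (hasDerivAt_sum_sq_div_two Finset.univ fun j _ => (hw j).hasDerivAt)).deriv

theorem pd_fun_mul {f g : (Fin 3 → ℝ) → ℝ} {x : Fin 3 → ℝ} (hf : DifferentiableAt ℝ f x)
    (hg : DifferentiableAt ℝ g x) (i : Fin 3) :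
    pd (fun y => f y * g y) i x = pd f i x * g x + f x * pd g i x := by
  simp only [pd, fderiv_fun_mul hf hg, _root_.add_apply, _root_.smul_apply, smul_eq_mul]
  ring

theorem pd_fun_sum {ι : Type*} (S : Finset ι) {f : ι → (Fin 3 → ℝ) → ℝ} {x : Fin 3 → ℝ}
    (hf : ∀ j ∈ S, DifferentiableAt ℝ (f j) x) (i : Fin 3) :
    pd (fun y => ∑ j ∈ S, f j y) i x = ∑ j ∈ S, pd (f j) i x := by
  simp only [pd, fderiv_fun_sum hf, _root_.sum_apply]

theorem sum_pd_sum_mul {ι : Type*} [Fintype ι] (S : (Fin 3 → ℝ) → Matrix (Fin 3) ι ℝ)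
    (w : (Fin 3 → ℝ) → ι → ℝ) (x : Fin 3 → ℝ)
    (hS : ∀ i j, DifferentiableAt ℝ (fun y => S y i j) x)
    (hw : ∀ j, DifferentiableAt ℝ (fun y => w y j) x) :
    ∑ i, pd (fun y => ∑ j, S y i j * w y j) i x
      = ∑ j, (∑ i, pd (fun y => S y i j) i x) * w x j
        + ∑ i, ∑ j, S x i j * pd (fun y => w y j) i x := by
  have hrow : ∀ i, pd (fun y => ∑ j, S y i j * w y j) i x
      = ∑ j, pd (fun y => S y i j) i x * w x j + ∑ j, S x i j * pd (fun y => w y j) i x := by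
    intro i
    rw [pd_fun_sum _ (fun j _ => (hS i j).fun_mul (hw j)), ← Finset.sum_add_distrib]
    exact Finset.sum_congr rfl fun j _ => pd_fun_mul (hS i j) (hw j) i
  simp only [hrow, Finset.sum_add_distrib, Finset.sum_mul]
  rw [Finset.sum_comm]

theorem mul_sum_mul_eq_of_forall_mul_eq {ι : Type*} [Fintype ι] {ρ r : ℝ} {a v D F : ι → ℝ}
    (h : ∀ j, ρ * a j = D j + ρ * F j - r * v j) :
    ρ * ∑ j, v j * a j = ∑ j, D j * v j + ρ * ∑ j, F j * v j - r * ∑ j, v j ^ 2 := by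
  calc ρ * ∑ j, v j * a j = ∑ j, v j * (ρ * a j) := by
        rw [Finset.mul_sum]; exact Finset.sum_congr rfl fun j _ => by ring
    _ = ∑ j, (D j * v j + ρ * (F j * v j) - r * v j ^ 2) :=
        Finset.sum_congr rfl fun j _ => by rw [h j]; ring
    _ = _ := by
        rw [Finset.sum_sub_distrib, Finset.sum_add_distrib, ← Finset.mul_sum, ← Finset.mul_sum]

/-- From the equation of motion
`ρ ∂²u/∂t² = ∇·s + ρ(f + f̂) − ρ̂ v` and the total energy balance
`ρ ∂(e + |v|²/2)/∂t − ∇·(s·v) + ∇·q = ρ(h + ĥ + f·v − (ρ̂/ρ)(e + |v|²/2))`,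
the internal energy balance `ρ ∂e/∂t − sᵀ:∇v + ∇·q = g` follows, where
`g = ρ(h + ĥ) − ρ f̂·v − ρ̂(e − |v|²/2)`. -/
theorem internal_energy_balance
    (ρ e h hhat ρhat : (Fin 3 → ℝ) × ℝ → ℝ)
    (f fhat q : (Fin 3 → ℝ) × ℝ → (Fin 3 → ℝ))
    (s : (Fin 3 → ℝ) × ℝ → Matrix (Fin 3) (Fin 3) ℝ)
    (u : (Fin 3 → ℝ) × ℝ → (Fin 3 → ℝ))
    (hρpos : ∀ p : (Fin 3 → ℝ) × ℝ, 0 < ρ p)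
    -- smoothness hypotheses
    (he : ∀ x : Fin 3 → ℝ, Differentiable ℝ (fun τ => e (x, τ)))
    (hv : ∀ (x : Fin 3 → ℝ) (j : Fin 3), Differentiable ℝ (fun τ => vel u (x, τ) j))
    (hsx : ∀ (t : ℝ) (i j : Fin 3), Differentiable ℝ (fun x => s (x, t) i j))
    (hvx : ∀ (t : ℝ) (j : Fin 3), Differentiable ℝ (fun x => vel u (x, t) j))
    -- the equation of motion
    (hmotion : ∀ (p : (Fin 3 → ℝ) × ℝ) (j : Fin 3),
      ρ p * tderiv (fun r => vel u r j) p
        = (∑ i, pd (fun y => s (y, p.2) i j) i p.1)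
          + ρ p * (f p j + fhat p j) - ρhat p * vel u p j)
    -- the total energy balance
    (henergy : ∀ p : (Fin 3 → ℝ) × ℝ,
      ρ p * tderiv (fun r => e r + (∑ j, (vel u r j) ^ 2) / 2) p
        - (∑ i, pd (fun y => ∑ j, s (y, p.2) i j * vel u (y, p.2) j) i p.1)
        + (∑ i, pd (fun y => q (y, p.2) i) i p.1)
        = ρ p * (h p + hhat p + (∑ j, f p j * vel u p j)
            - (ρhat p / ρ p) * (e p + (∑ j, (vel u p j) ^ 2) / 2))) :
    -- internal energy balance
    ∀ p : (Fin 3 → ℝ) × ℝ,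
      ρ p * tderiv e p
        - (∑ i, ∑ j, s p i j * pd (fun y => vel u (y, p.2) j) i p.1)
        + (∑ i, pd (fun y => q (y, p.2) i) i p.1)
        = ρ p * (h p + hhat p) - ρ p * (∑ j, fhat p j * vel u p j)
          - ρhat p * (e p - (∑ j, (vel u p j) ^ 2) / 2) := by
  intro p
  have hE := henergy p
  rw [tderiv_add_half_sum_sq e (vel u) p (he _ _) (fun j => hv _ j _),
    sum_pd_sum_mul (fun y => s (y, p.2)) (fun y => vel u (y, p.2)) p.1
      (fun i j => hsx _ i j _) (fun j => hvx _ j _)] at hE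
  have hpower := mul_sum_mul_eq_of_forall_mul_eq (hmotion p)
  have hforce : ∑ j, (f p j + fhat p j) * vel u p j
      = ∑ j, f p j * vel u p j + ∑ j, fhat p j * vel u p j := by
    simp only [add_mul, Finset.sum_add_distrib]
  have hcancel : ρ p * (ρhat p / ρ p) = ρhat p := mul_div_cancel₀ _ (hρpos p).ne'
  linear_combination hE - hpower - ρ p * hforce
    - (e p + (∑ j, vel u p j ^ 2) / 2) * hcancel
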